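/- For every integer n ≥ 2 and every j ∈ {1, …, n−1}, the number of non-primitive Dyck paths of semilength n whose first peak has height 2 and whose last peak has height j equals |D_n(1, j+1)|. -/

import Mathlib

/-!
Both sides are in bijection with the pairs `(C, B)` of Dyck words of total semilength `n - 2`
such that the last peak of `B` has height `j`. Cutting a non-primitive path with first peak `2`
at its first return to the axis writes it uniquely as `r (r f C) f · B` with `B` nonempty. A path
with first peak `1` is `r f · D`, and cutting `D` at its last return writes it uniquely as
`r f · C · r B f`; raising `B` to `r B f` adds one to the height of its last peak.
-/

/-- A Dyck word: a list of booleans (`true` = rise, `false` = fall) with equally many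
rises and falls such that every prefix has at least as many rises as falls. -/
def IsDyckWord (w : List Bool) : Prop :=
  w.count true = w.count false ∧ ∀ p, p <+: w → p.count false ≤ p.count true

/-- The list of heights of the peaks (occurrences of the factor `rf`) of a word,
from left to right. The height of a peak is the number of rises minus the number
of falls in the prefix ending with the rise of that peak. -/
def peakHeights (w : List Bool) : List ℕ :=
  (List.range w.length).filterMap (fun k =>
    if w[k]? = some true ∧ w[k + 1]? = some false then
      some ((w.take (k + 1)).count true - (w.take (k + 1)).count false)
    else none)

/-- `DyckD n i j` is the set of Dyck paths of semilength `n` whose first peak has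
height `i` and whose last peak has height `j`. -/
def DyckD (n i j : ℕ) : Set (List Bool) :=
  {w | IsDyckWord w ∧ w.count true = n ∧
    (peakHeights w).head? = some i ∧ (peakHeights w).getLast? = some j}
/-- A Dyck word is primitive if every proper nonempty prefix has strictly more
rises than falls, i.e. the path touches the x-axis only at its endpoints. -/
def IsPrimitiveWord (w : List Bool) : Prop :=
  ∀ p, p <+: w → p ≠ [] → p ≠ w → p.count false < p.count true

theorem List.prefix_or_exists_of_prefix_append {α : Type*} {p u v : List α} (h : p <+: u ++ v) :
    p <+: u ∨ ∃ q, q <+: v ∧ p = u ++ q := by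
  rcases le_total p.length u.length with hle | hle
  · exact .inl ((List.isPrefix_append_of_length hle).mp h)
  · refine .inr ⟨v.take (p.length - u.length), List.take_prefix _ _, ?_⟩
    conv_lhs => rw [List.prefix_iff_eq_take.mp h]
    rw [List.take_append, List.take_of_length_le hle]

def List.elevate (w : List Bool) : List Bool := true :: (w ++ [false])

theorem IsDyckWord.nil : IsDyckWord [] := ⟨rfl, by simp⟩

theorem IsDyckWord.append {u v : List Bool} (hu : IsDyckWord u) (hv : IsDyckWord v) :
    IsDyckWord (u ++ v) := by
  refine ⟨by simp [hu.1, hv.1], fun p hp => ?_⟩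
  rcases List.prefix_or_exists_of_prefix_append hp with hp | ⟨q, hq, rfl⟩
  · exact hu.2 p hp
  · have := hv.2 q hq
    simp [hu.1]
    omega

theorem IsDyckWord.of_append {u v : List Bool} (huv : IsDyckWord (u ++ v))
    (hu : u.count true = u.count false) : IsDyckWord u ∧ IsDyckWord v := by
  refine ⟨⟨hu, fun p hp => huv.2 p (hp.trans (List.prefix_append _ _))⟩, ?_, fun q hq => ?_⟩
  · have := huv.1
    simp at this
    omega
  · have := huv.2 (u ++ q) ((List.prefix_append_right_inj u).mpr hq)
    simp at this
    omega

theorem IsDyckWord.head?_ne_some_false {w : List Bool} (hw : IsDyckWord w) :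
    w.head? ≠ some false := by
  intro h
  obtain ⟨t, rfl⟩ : ∃ t, w = false :: t := by
    cases w <;> simp_all
  simpa using hw.2 [false] (by simp)

theorem IsDyckWord.getLast?_ne_some_true {w : List Bool} (hw : IsDyckWord w) :
    w.getLast? ≠ some true := by
  intro h
  rcases List.eq_nil_or_concat' w with rfl | ⟨L, b, rfl⟩
  · simp at h
  · simp only [List.getLast?_concat, Option.some.injEq] at h
    subst h
    have := hw.1
    have := hw.2 L (List.prefix_append _ _)
    simp at *
    omega

theorem IsDyckWord.elevate {w : List Bool} (hw : IsDyckWord w) : IsDyckWord w.elevate := by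
  refine ⟨by simp [List.elevate, hw.1], fun p hp => ?_⟩
  rcases List.prefix_cons_iff.mp hp with rfl | ⟨t, rfl, ht⟩
  · simp
  rcases List.prefix_concat_iff.mp ht with rfl | ht
  · simp [hw.1]
  · have := hw.2 t ht
    simp
    omega

theorem IsDyckWord.isPrimitiveWord_elevate {w : List Bool} (hw : IsDyckWord w) :
    IsPrimitiveWord w.elevate := by
  intro p hp hp0 hpw
  simp only [List.elevate] at hp hpw
  rcases List.prefix_cons_iff.mp hp with rfl | ⟨t, rfl, ht⟩
  · exact absurd rfl hp0
  rcases List.prefix_concat_iff.mp ht with rfl | ht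
  · exact absurd rfl hpw
  · have := hw.2 t ht
    simp
    omega

theorem IsPrimitiveWord.eq_of_prefix {w p : List Bool} (hw : IsPrimitiveWord w) (hp : p <+: w)
    (hp0 : p ≠ []) (hbal : p.count true = p.count false) : p = w := by
  unfold IsPrimitiveWord at hw
  by_contra h
  have := hw p hp hp0 h
  omega

theorem IsPrimitiveWord.exists_eq_elevate {w : List Bool} (hprim : IsPrimitiveWord w)
    (hw : IsDyckWord w) (hne : w ≠ []) : ∃ A, IsDyckWord A ∧ w = A.elevate := by
  unfold IsPrimitiveWord at hprim
  obtain ⟨b, t, rfl⟩ := List.exists_cons_of_ne_nil hne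
  obtain rfl : b = true := by simpa using hw.head?_ne_some_false
  rcases List.eq_nil_or_concat' t with rfl | ⟨A, x, rfl⟩
  · simpa using hw.1
  have hA : ∀ q, q <+: A → q.count false ≤ q.count true := fun q hq => by
    have hlt : q.length < (A ++ [x]).length := by simpa using hq.length_le
    have := hprim (true :: q) (by simpa using hq.trans (List.prefix_append _ _)) (by simp)
      (by rintro ⟨⟩; exact lt_irrefl _ hlt)
    simp at this
    omega
  obtain rfl : x = false := by
    have := hw.1
    have := hA A (List.prefix_refl _)
    cases x <;> simp at *
    omega
  exact ⟨A, ⟨by simpa using hw.1, hA⟩, rfl⟩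

theorem IsDyckWord.exists_eq_elevate_append {w : List Bool} (hw : IsDyckWord w)
    (hne : w ≠ []) : ∃ A B, IsDyckWord A ∧ IsDyckWord B ∧ w = A.elevate ++ B := by
  classical
  have hex : ∃ m, 0 < m ∧ (w.take m).count true = (w.take m).count false :=
    ⟨w.length, List.length_pos_iff.mpr hne, by simpa using hw.1⟩
  obtain ⟨hm0, hbal⟩ := Nat.find_spec hex
  set p := w.take (Nat.find hex)
  have hsplit : w = p ++ w.drop (Nat.find hex) := (List.take_append_drop _ _).symm
  obtain ⟨hp, hs⟩ := (hsplit ▸ hw).of_append hbal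
  have hprim : IsPrimitiveWord p := by
    intro q hq hq0 hqp
    have hlt : q.length < Nat.find hex := by
      have := hq.length_le
      have := mt hq.eq_of_length hqp
      simp only [p, List.length_take] at *
      omega
    have hqw : q = w.take q.length :=
      List.prefix_iff_eq_take.mp (hq.trans (List.take_prefix _ _))
    have hunbal := Nat.find_min hex hlt
    have := hp.2 q hq
    rw [← hqw] at hunbal
    have := List.length_pos_iff.mpr hq0
    omega
  obtain ⟨A, hA, hpA⟩ := hprim.exists_eq_elevate hp (by simp [p, hne, hm0.ne'])
  exact ⟨A, _, hA, hs, hpA ▸ hsplit⟩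

theorem IsDyckWord.induction {motive : ∀ w, IsDyckWord w → Prop} (nil : motive [] .nil)
    (elevate_append : ∀ A B (hA : IsDyckWord A) (hB : IsDyckWord B), motive A hA →
      motive B hB → motive (A.elevate ++ B) (hA.elevate.append hB))
    {w : List Bool} (hw : IsDyckWord w) : motive w hw := by
  induction hlen : w.length using Nat.strong_induction_on generalizing w with
  | _ n ih =>
    rcases eq_or_ne w [] with rfl | hne
    · exact nil
    obtain ⟨A, B, hA, hB, rfl⟩ := hw.exists_eq_elevate_append hne
    simp only [List.elevate, List.length_append, List.length_cons] at hlen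
    exact elevate_append A B hA hB (ih _ (by omega) hA rfl) (ih _ (by omega) hB rfl)

theorem IsDyckWord.exists_eq_append_elevate {w : List Bool} (hw : IsDyckWord w)
    (hne : w ≠ []) : ∃ C B, IsDyckWord C ∧ IsDyckWord B ∧ w = C ++ B.elevate := by
  induction hw using IsDyckWord.induction with
  | nil => exact absurd rfl hne
  | elevate_append A B hA hB _ ihB =>
    rcases eq_or_ne B [] with rfl | hB0
    · exact ⟨[], A, .nil, hA, by simp⟩
    obtain ⟨C, B', hC, hB', rfl⟩ := ihB hB0
    exact ⟨A.elevate ++ C, B', hA.elevate.append hC, hB', by simp⟩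

theorem IsDyckWord.isPrimitiveWord_elevate_append_iff {A B : List Bool} (hA : IsDyckWord A) :
    IsPrimitiveWord (A.elevate ++ B) ↔ B = [] := by
  refine ⟨fun hprim => ?_, by rintro rfl; simpa using hA.isPrimitiveWord_elevate⟩
  have := hprim.eq_of_prefix (List.prefix_append _ _) (by simp [List.elevate]) hA.elevate.1
  simpa using this

theorem IsDyckWord.elevate_append_inj {A A' B B' : List Bool} (hA : IsDyckWord A)
    (hA' : IsDyckWord A') (h : A.elevate ++ B = A'.elevate ++ B') : A = A' ∧ B = B' := by
  have hAA' : A.elevate = A'.elevate := by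
    rcases List.prefix_or_prefix_of_prefix (List.prefix_append _ B)
      (h ▸ List.prefix_append _ B') with hle | hle
    · exact hA'.isPrimitiveWord_elevate.eq_of_prefix hle (by simp [List.elevate]) hA.elevate.1
    · exact (hA.isPrimitiveWord_elevate.eq_of_prefix hle (by simp [List.elevate])
        hA'.elevate.1).symm
  rw [hAA'] at h
  exact ⟨by simpa [List.elevate] using hAA', List.append_cancel_left h⟩

theorem IsDyckWord.eq_of_append_elevate_eq_of_prefix {C C' B X : List Bool}
    (hC : IsDyckWord C) (hC' : IsDyckWord C') (hB : IsDyckWord B) (hX : X ≠ [])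
    (h : C ++ B.elevate = C' ++ X) (hle : C <+: C') : C = C' := by
  obtain ⟨q, rfl⟩ := hle
  have hq : q <+: B.elevate := by
    rw [List.append_assoc] at h
    exact (List.prefix_append_right_inj C).mp (by rw [h]; simp)
  rcases eq_or_ne q [] with rfl | hq0
  · simp
  have hbal : q.count true = q.count false := by simpa [hC.1] using hC'.1
  obtain rfl := hB.isPrimitiveWord_elevate.eq_of_prefix hq hq0 hbal
  simp [hX] at h

theorem IsDyckWord.append_elevate_inj {C C' B B' : List Bool} (hC : IsDyckWord C)
    (hC' : IsDyckWord C') (hB : IsDyckWord B) (hB' : IsDyckWord B')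
    (h : C ++ B.elevate = C' ++ B'.elevate) : C = C' ∧ B = B' := by
  have hCC' : C = C' := by
    rcases List.prefix_or_prefix_of_prefix (List.prefix_append C B.elevate)
      (h ▸ List.prefix_append C' B'.elevate) with hle | hle
    · exact hC.eq_of_append_elevate_eq_of_prefix hC' hB (by simp [List.elevate]) h hle
    · exact (hC'.eq_of_append_elevate_eq_of_prefix hC hB' (by simp [List.elevate]) h.symm hle).symm
  subst hCC'
  exact ⟨rfl, by simpa [List.elevate] using List.append_cancel_left h⟩

def peakAt (w : List Bool) (k : ℕ) : Option ℕ :=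
  if w[k]? = some true ∧ w[k + 1]? = some false then
    some ((w.take (k + 1)).count true - (w.take (k + 1)).count false)
  else none

theorem peakHeights_eq_filterMap_peakAt (w : List Bool) :
    peakHeights w = (List.range w.length).filterMap (peakAt w) := rfl

theorem peakAt_append_of_lt {u v : List Bool} {k : ℕ} (hk : k < u.length)
    (hb : ¬(u.getLast? = some true ∧ v.head? = some false)) :
    peakAt (u ++ v) k = peakAt u k := by
  have htake : (u ++ v).take (k + 1) = u.take (k + 1) := List.take_append_of_le_length hk
  rcases Nat.lt_or_ge (k + 1) u.length with hk1 | hk1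
  · simp [peakAt, List.getElem?_append_left hk, List.getElem?_append_left hk1, htake]
  · have hlast : u.getLast? = u[k]? := by rw [List.getLast?_eq_getElem?]; congr; omega
    have hnext : (u ++ v)[k + 1]? = v.head? := by
      rw [List.getElem?_append_right hk1, List.head?_eq_getElem?]; congr; omega
    simp only [peakAt, List.getElem?_append_left hk, hnext,
      List.getElem?_eq_none (by omega : u.length ≤ k + 1)]
    rw [hlast] at hb
    simp [hb]

theorem peakAt_append_length_add {u v : List Bool} {k : ℕ} (hu : u.count false ≤ u.count true)
    (hv : v[k]? = some true → (v.take (k + 1)).count false ≤ (v.take (k + 1)).count true) :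
    peakAt (u ++ v) (u.length + k) = (peakAt v k).map (· + (u.count true - u.count false)) := by
  have htake : (u ++ v).take (u.length + k + 1) = u ++ v.take (k + 1) := by
    rw [Nat.add_assoc, List.take_length_add_append]
  have h1 : (u ++ v)[u.length + k]? = v[k]? := by
    rw [List.getElem?_append_right (by omega), Nat.add_sub_cancel_left]
  have h2 : (u ++ v)[u.length + k + 1]? = v[k + 1]? := by
    rw [List.getElem?_append_right (by omega)]; congr 1; omega
  unfold peakAt
  rw [h1, h2, htake]
  split_ifs with h
  · have := hv h.1
    simp only [List.count_append, Option.map_some, Option.some.injEq]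
    omega
  · rfl

-- `hu` and `hv` make the truncated subtraction in the height formula exact.
theorem peakHeights_append {u v : List Bool}
    (hb : ¬(u.getLast? = some true ∧ v.head? = some false)) (hu : u.count false ≤ u.count true)
    (hv : ∀ k, v[k]? = some true →
      (v.take (k + 1)).count false ≤ (v.take (k + 1)).count true) :
    peakHeights (u ++ v) =
      peakHeights u ++ (peakHeights v).map (· + (u.count true - u.count false)) := by
  simp only [peakHeights_eq_filterMap_peakAt, List.length_append, List.range_add,
    List.filterMap_append, List.filterMap_map, List.map_filterMap]
  congr 1
  · exact List.filterMap_congr fun k hk => peakAt_append_of_lt (List.mem_range.mp hk) hb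
  · exact List.filterMap_congr fun k _ => peakAt_append_length_add hu (hv k)

theorem IsDyckWord.peakHeights_append {u v : List Bool} (hu : IsDyckWord u) (hv : IsDyckWord v) :
    peakHeights (u ++ v) = peakHeights u ++ peakHeights v := by
  rw [_root_.peakHeights_append (fun h => hu.getLast?_ne_some_true h.1) hu.1.ge
    (fun k _ => hv.2 _ (List.take_prefix _ _)), hu.1, Nat.sub_self]
  simp

theorem peakHeights_elevate_nil : peakHeights ([] : List Bool).elevate = [1] := rfl

theorem IsDyckWord.peakHeights_elevate {w : List Bool} (hw : IsDyckWord w) (hne : w ≠ []) :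
    peakHeights w.elevate = (peakHeights w).map (· + 1) := by
  have hrise : peakHeights ([true] ++ w) = (peakHeights w).map (· + 1) := by
    rw [_root_.peakHeights_append (fun h => hw.head?_ne_some_false h.2) (by simp)
      (fun k _ => hw.2 _ (List.take_prefix _ _))]
    rfl
  have hfall : peakHeights (([true] ++ w) ++ [false]) = peakHeights ([true] ++ w) := by
    rw [_root_.peakHeights_append ?_ ?_ ?_]
    · simp [show peakHeights [false] = [] from rfl]
    · rw [List.getLast?_append_of_ne_nil _ hne]
      exact fun h => hw.getLast?_ne_some_true h.1
    · simp [hw.1]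
    · intro k hk
      simp [List.getElem?_cons] at hk
  rw [← hrise, ← hfall]
  rfl

theorem IsDyckWord.pos_of_mem_peakHeights {w : List Bool} (hw : IsDyckWord w) {x : ℕ}
    (hx : x ∈ peakHeights w) : 0 < x := by
  rw [peakHeights_eq_filterMap_peakAt] at hx
  obtain ⟨k, -, hk⟩ := List.mem_filterMap.mp hx
  unfold peakAt at hk
  split_ifs at hk with h
  rw [List.take_add_one, h.1] at hk
  have := hw.2 (w.take k) (List.take_prefix _ _)
  simp at hk
  omega

theorem IsDyckWord.peakHeights_ne_nil {w : List Bool} (hw : IsDyckWord w) (hne : w ≠ []) :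
    peakHeights w ≠ [] := by
  induction hw using IsDyckWord.induction with
  | nil => exact absurd rfl hne
  | elevate_append A B hA hB ihA _ =>
    rw [hA.elevate.peakHeights_append hB]
    rcases eq_or_ne A [] with rfl | hA0
    · simp [peakHeights_elevate_nil]
    · simp [hA.peakHeights_elevate hA0, ihA hA0]

theorem IsDyckWord.head?_peakHeights_elevate_append {A B : List Bool} (hA : IsDyckWord A)
    (hB : IsDyckWord B) : (peakHeights (A.elevate ++ B)).head? =
      if A = [] then some 1 else (peakHeights A).head?.map (· + 1) := by
  rw [hA.elevate.peakHeights_append hB]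
  split_ifs with hA0
  · subst hA0
    rfl
  · rw [hA.peakHeights_elevate hA0,
      List.head?_append_of_ne_nil _ (by simpa using hA.peakHeights_ne_nil hA0), List.head?_map]

theorem IsDyckWord.getLast?_peakHeights_append {u v : List Bool} (hu : IsDyckWord u)
    (hv : IsDyckWord v) (hv0 : v ≠ []) :
    (peakHeights (u ++ v)).getLast? = (peakHeights v).getLast? := by
  rw [hu.peakHeights_append hv, List.getLast?_append_of_ne_nil _ (hv.peakHeights_ne_nil hv0)]

theorem IsDyckWord.getLast?_peakHeights_append_elevate {C B : List Bool} (hC : IsDyckWord C)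
    (hB : IsDyckWord B) : (peakHeights (C ++ B.elevate)).getLast? =
      if B = [] then some 1 else (peakHeights B).getLast?.map (· + 1) := by
  rw [hC.getLast?_peakHeights_append hB.elevate (by simp [List.elevate])]
  split_ifs with hB0
  · subst hB0
    rfl
  · rw [hB.peakHeights_elevate hB0, List.getLast?_map]

theorem IsDyckWord.exists_eq_elevate_nil_append {w : List Bool} (hw : IsDyckWord w)
    (h1 : (peakHeights w).head? = some 1) : ∃ C, IsDyckWord C ∧ w = [].elevate ++ C := by
  have hne : w ≠ [] := by
    rintro rfl
    simp [peakHeights] at h1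
  obtain ⟨A, B, hA, hB, rfl⟩ := hw.exists_eq_elevate_append hne
  rw [hA.head?_peakHeights_elevate_append hB] at h1
  split_ifs at h1 with hA0
  · exact ⟨B, hB, hA0 ▸ rfl⟩
  · obtain ⟨x, hx, hx1⟩ := Option.map_eq_some_iff.mp h1
    have := hA.pos_of_mem_peakHeights (List.mem_of_head? hx)
    omega

def PeakPairs (n j : ℕ) : Set (List Bool × List Bool) :=
  {p | IsDyckWord p.1 ∧ IsDyckWord p.2 ∧ (peakHeights p.2).getLast? = some j ∧
    p.1.count true + p.2.count true + 2 = n}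

theorem setOf_nonprimitive_mem_dyckD_two_eq_image (n j : ℕ) :
    {w | w ∈ DyckD n 2 j ∧ ¬ IsPrimitiveWord w} =
      (fun p => ([].elevate ++ p.1).elevate ++ p.2) '' PeakPairs n j := by
  ext w
  constructor
  · rintro ⟨⟨hw, hn, hfirst, hlast⟩, hprim⟩
    have hne : w ≠ [] := by
      rintro rfl
      simp [peakHeights] at hfirst
    obtain ⟨A, B, hA, hB, rfl⟩ := hw.exists_eq_elevate_append hne
    have hB0 : B ≠ [] := mt (hA.isPrimitiveWord_elevate_append_iff).mpr hprim
    rw [hA.head?_peakHeights_elevate_append hB] at hfirst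
    split_ifs at hfirst
    · simp at hfirst
    obtain ⟨C, hC, rfl⟩ := hA.exists_eq_elevate_nil_append (by simpa using hfirst)
    refine ⟨(C, B), ⟨hC, hB, ?_, ?_⟩, rfl⟩
    · rwa [← hA.elevate.getLast?_peakHeights_append hB hB0]
    · simp [List.elevate] at hn
      simp
      omega
  · rintro ⟨⟨C, B⟩, ⟨hC, hB, hlast, hn⟩, rfl⟩
    have hB0 : B ≠ [] := by
      rintro rfl
      simp [peakHeights] at hlast
    have hA : IsDyckWord ([].elevate ++ C) := IsDyckWord.nil.elevate.append hC
    refine ⟨⟨hA.elevate.append hB, ?_, ?_, ?_⟩, ?_⟩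
    · simp [List.elevate]
      omega
    · rw [hA.head?_peakHeights_elevate_append hB, if_neg (by simp [List.elevate]),
        IsDyckWord.nil.head?_peakHeights_elevate_append hC]
      rfl
    · rwa [hA.elevate.getLast?_peakHeights_append hB hB0]
    · rwa [hA.isPrimitiveWord_elevate_append_iff]

theorem dyckD_one_succ_eq_image {n j : ℕ} (hj : j ≠ 0) :
    DyckD n 1 (j + 1) = (fun p => [].elevate ++ (p.1 ++ p.2.elevate)) '' PeakPairs n j := by
  ext w
  constructor
  · rintro ⟨hw, hn, hfirst, hlast⟩
    obtain ⟨D, hD, rfl⟩ := hw.exists_eq_elevate_nil_append hfirst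
    have hD0 : D ≠ [] := by
      rintro rfl
      simp [peakHeights_elevate_nil] at hlast
      exact hj hlast
    obtain ⟨C, B, hC, hB, rfl⟩ := hD.exists_eq_append_elevate hD0
    rw [← List.append_assoc,
      (IsDyckWord.nil.elevate.append hC).getLast?_peakHeights_append_elevate hB] at hlast
    split_ifs at hlast
    · simp at hlast
      omega
    refine ⟨(C, B), ⟨hC, hB, by simpa using hlast, ?_⟩, rfl⟩
    simp [List.elevate] at hn
    simp
    omega
  · rintro ⟨⟨C, B⟩, ⟨hC, hB, hlast, hn⟩, rfl⟩
    have hB0 : B ≠ [] := by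
      rintro rfl
      simp [peakHeights] at hlast
    refine ⟨IsDyckWord.nil.elevate.append (hC.append hB.elevate), ?_, ?_, ?_⟩
    · simp [List.elevate]
      omega
    · rw [IsDyckWord.nil.head?_peakHeights_elevate_append (hC.append hB.elevate)]
      rfl
    · dsimp only
      rw [← List.append_assoc,
        (IsDyckWord.nil.elevate.append hC).getLast?_peakHeights_append_elevate hB, if_neg hB0,
        hlast]
      rfl

theorem injOn_elevate_elevate_nil_append :
    Set.InjOn (fun p : List Bool × List Bool => ([].elevate ++ p.1).elevate ++ p.2)
      {p | IsDyckWord p.1} := by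
  rintro ⟨C, B⟩ hC ⟨C', B'⟩ hC' h
  obtain ⟨hCC', rfl⟩ := (IsDyckWord.nil.elevate.append hC).elevate_append_inj
    (IsDyckWord.nil.elevate.append hC') h
  simpa using hCC'

theorem injOn_elevate_nil_append_append_elevate :
    Set.InjOn (fun p : List Bool × List Bool => [].elevate ++ (p.1 ++ p.2.elevate))
      {p | IsDyckWord p.1 ∧ IsDyckWord p.2} := by
  rintro ⟨C, B⟩ ⟨hC, hB⟩ ⟨C', B'⟩ ⟨hC', hB'⟩ h
  obtain ⟨rfl, rfl⟩ := hC.append_elevate_inj hC' hB hB' (List.append_cancel_left h)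
  rfl

theorem nonprimitive_count_eq (n : ℕ) (j : ℕ) (hj : j ∈ Finset.Icc 1 (n - 1)) :
    {w | w ∈ DyckD n 2 j ∧ ¬ IsPrimitiveWord w}.ncard = (DyckD n 1 (j + 1)).ncard := by
  have hj0 : j ≠ 0 := Nat.one_le_iff_ne_zero.mp (Finset.mem_Icc.mp hj).1
  rw [setOf_nonprimitive_mem_dyckD_two_eq_image, dyckD_one_succ_eq_image hj0,
    (injOn_elevate_elevate_nil_append.mono fun _ hp => hp.1).ncard_image,
    (injOn_elevate_nil_append_append_elevate.mono fun _ hp => And.intro hp.1 hp.2.1).ncard_image]
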